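/- For every nonnegative integer n, the coefficient of y^n in the formal power series expansion of ((1 − y)e^y − 1)/((e^y − 1)²) equals B_{n+1}/n!, where B_m are the Bernoulli numbers. -/

import Mathlib

open PowerSeries

/-!
Differentiating `B(y)·(e^y − 1) = y`, where `B` is the exponential generating function of the
Bernoulli numbers, multiplying by `e^y − 1` and using the identity once more gives
`B'(y)·(e^y − 1)² = (1 − y)e^y − 1`.
Since `(e^y − 1)²` is not a zero divisor, `G = B'`, whose `n`-th coefficient is `B_{n+1}/n!`.
-/

section QAlgebra

variable (A : Type*) [CommRing A] [Algebra ℚ A]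

theorem derivative_bernoulliPowerSeries_mul_exp_sub_one_sq :
    d⁄dX A (bernoulliPowerSeries A) * (exp A - 1) ^ 2 = (1 - X) * exp A - 1 := by
  have h := bernoulliPowerSeries_mul_exp_sub_one A
  have h' := congrArg (d⁄dX A) h
  rw [Derivation.leibniz] at h'
  simp only [map_sub, derivative_exp, derivative_X, Derivation.map_one_eq_zero, sub_zero,
    smul_eq_mul] at h'
  linear_combination (exp A - 1) * h' - exp A * h

theorem coeff_derivative_bernoulliPowerSeries (n : ℕ) :
    coeff n (d⁄dX A (bernoulliPowerSeries A)) =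
      algebraMap ℚ A (bernoulli (n + 1) / n.factorial) := by
  rw [coeff_derivative, bernoulliPowerSeries, coeff_mk, ← map_natCast (algebraMap ℚ A),
    ← map_one (algebraMap ℚ A), ← map_add, ← map_mul, Nat.factorial_succ]
  congr 1
  push_cast
  field_simp

theorem PowerSeries.exp_sub_one_ne_zero [Nontrivial A] : exp A - 1 ≠ 0 := by
  intro h
  simpa [coeff_exp] using congrArg (coeff 1) h

end QAlgebra

/-- If `G ∈ ℚ[[y]]` satisfies `G·(e^y − 1)² = (1 − y)e^y − 1`, i.e.
`G = ((1 − y)e^y − 1)/((e^y − 1)²)`, then the coefficient of `y^n` in `G` is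
`B_{n+1}/n!`. -/
theorem stmt_14 (G : PowerSeries ℚ)
    (hG : G * (PowerSeries.exp ℚ - 1) ^ 2 = (1 - PowerSeries.X) * PowerSeries.exp ℚ - 1) :
    ∀ n : ℕ, PowerSeries.coeff n G = bernoulli (n + 1) / (n.factorial : ℚ) := by
  have hG' : G = d⁄dX ℚ (bernoulliPowerSeries ℚ) :=
    mul_right_cancel₀ (pow_ne_zero 2 (exp_sub_one_ne_zero ℚ))
      (hG.trans (derivative_bernoulliPowerSeries_mul_exp_sub_one_sq ℚ).symm)
  intro n
  rw [hG', coeff_derivative_bernoulliPowerSeries, Algebra.algebraMap_self, RingHom.id_apply]
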